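/- The maximum-cardinality greedy choice function (increasing wage order, total wage at most B) satisfies substitutability, irrelevance of rejected contracts, and the law of aggregate demand. -/

import Mathlib

open Finset in
/-- The maximum-cardinality greedy choice function: sort `A` in increasing order of
wage (the fixed linear order on contracts is consistent with increasing wage) and add
each contract if the running total wage including it stays at most `B`; equivalently,
take the longest prefix of the sorted list whose total wage is at most `B`. -/
noncomputable def chCard {ι : Type*} [LinearOrder ι] (w : ι → ℝ) (B : ℝ)
    (A : Finset ι) : Finset ι := by
  classical
  exact
    let L := A.sort (· ≤ ·)
    (L.take (Nat.findGreatest (fun k => ((L.take k).map w).sum ≤ B) L.length)).toFinset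

/-!
With nonnegative wages the prefix sums of the wage-sorted list grow with the prefix, so a
contract `x` is chosen from `A` exactly when the wages of the contracts of `A` up to `x` fit in
the budget. That total only grows when `A` grows, which gives substitutability and
`Ch(X' ∪ X'') ⊆ Ch(X')` under the hypothesis of IRC. For the law of aggregate demand, the
`i`-th cheapest contract of a superset is at most the `i`-th cheapest of the subset, so the
prefix of the superset of length `|Ch(X'')|` is affordable too. Equality in IRC then follows
from the inclusion and LAD.
-/

namespace List

variable {α : Type*} [LinearOrder α] {l : List α}

theorem SortedLT.mem_take_succ_iff (hl : l.SortedLT) {j : ℕ} (hj : j < l.length) {y : α} :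
    y ∈ l.take (j + 1) ↔ y ∈ l ∧ y ≤ l[j] := by
  rw [mem_take_iff_getElem, mem_iff_getElem]
  constructor
  · rintro ⟨i, hi, rfl⟩
    exact ⟨⟨i, by omega, rfl⟩, hl.getElem_le_getElem_iff.2 (by omega)⟩
  · rintro ⟨⟨i, hi, rfl⟩, hij⟩
    exact ⟨i, by have := hl.getElem_le_getElem_iff.1 hij; omega, rfl⟩

theorem Sublist.getElem_le_of_sortedLT {l' : List α} (h : l <+ l') (hl' : l'.SortedLT)
    {i : ℕ} (hi : i < l.length) : l'[i]'(hi.trans_le h.length_le) ≤ l[i] := by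
  obtain ⟨f, hf⟩ := sublist_iff_exists_orderEmbedding_getElem?_eq.1 h
  have hfi := hf i
  rw [getElem?_eq_getElem hi, eq_comm, getElem?_eq_some_iff] at hfi
  obtain ⟨_, hget⟩ := hfi
  rw [← hget, hl'.getElem_le_getElem_iff]
  exact f.strictMono.id_le i

theorem Sublist.sum_map_take_le_of_sortedLT {M : Type*} [AddCommMonoid M] [PartialOrder M]
    [IsOrderedAddMonoid M] {f : α → M} (hf : Monotone f) {l' : List α} (h : l <+ l')
    (hl' : l'.SortedLT) {k : ℕ} (hk : k ≤ l.length) :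
    ((l'.take k).map f).sum ≤ ((l.take k).map f).sum := by
  refine Forall₂.sum_le_sum (forall₂_iff_get.2 ⟨?_, fun i hi₁ hi₂ => ?_⟩)
  · have := h.length_le
    simp only [length_map, length_take]
    omega
  · simp only [length_map, length_take] at hi₁ hi₂
    simpa using hf (h.getElem_le_of_sortedLT hl' (by omega))

end List

namespace Finset

variable {α : Type*} [LinearOrder α]

theorem sort_sublist_sort_of_subset {s t : Finset α} (hst : s ⊆ t) : s.sort.Sublist t.sort :=
  List.sublist_of_subperm_of_sortedLE
    (List.subperm_of_subset (sort_nodup s _) fun x hx => by simpa using hst (by simpa using hx))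
    (sortedLT_sort s).sortedLE (sortedLT_sort t).sortedLE

theorem sum_filter_le_sort_getElem {M : Type*} [AddCommMonoid M] (f : α → M) (s : Finset α)
    {j : ℕ} (hj : j < s.sort.length) :
    ∑ y ∈ s with y ≤ s.sort[j], f y = ((s.sort.take (j + 1)).map f).sum := by
  classical
  have hfilter : {y ∈ s | y ≤ s.sort[j]} = (s.sort.take (j + 1)).toFinset := by
    ext y
    simp [(sortedLT_sort s).mem_take_succ_iff hj]
  rw [hfilter, List.sum_toFinset _ ((List.take_sublist _ _).nodup (sort_nodup s _))]

end Finset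

section budgetPrefix

variable {ι : Type*} (w : ι → ℝ) (B : ℝ)

noncomputable def budgetPrefixLength (l : List ι) : ℕ :=
  Nat.findGreatest (fun k => ((l.take k).map w).sum ≤ B) l.length

variable {w B}

theorem budgetPrefixLength_le_length (l : List ι) : budgetPrefixLength w B l ≤ l.length :=
  Nat.findGreatest_le _

theorem lt_budgetPrefixLength_iff (hw : ∀ x, 0 ≤ w x) {l : List ι} {j : ℕ} (hj : j < l.length) :
    j < budgetPrefixLength w B l ↔ ((l.take (j + 1)).map w).sum ≤ B := by
  constructor
  · intro hjK
    have hK : ((l.take (budgetPrefixLength w B l)).map w).sum ≤ B :=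
      Nat.findGreatest_of_ne_zero rfl (Nat.ne_zero_of_lt hjK)
    refine le_trans (List.Sublist.sum_le_sum ?_ ?_) hK
    · exact (List.take_sublist_take_left hjK).map w
    · simp only [List.mem_map]
      rintro _ ⟨x, -, rfl⟩
      exact hw x
  · exact Nat.le_findGreatest (P := fun k => ((l.take k).map w).sum ≤ B) hj

theorem budgetPrefixLength_le_of_sublist [LinearOrder ι] (hw : Monotone w) {l l' : List ι}
    (h : l.Sublist l') (hl' : l'.SortedLT) :
    budgetPrefixLength w B l ≤ budgetPrefixLength w B l' := by
  set K := budgetPrefixLength w B l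
  obtain hK0 | hK0 := eq_or_ne K 0
  · omega
  have hKl : K ≤ l.length := budgetPrefixLength_le_length l
  have hK : ((l.take K).map w).sum ≤ B := Nat.findGreatest_of_ne_zero rfl hK0
  exact Nat.le_findGreatest (hKl.trans h.length_le)
    ((h.sum_map_take_le_of_sortedLT hw hl' hKl).trans hK)

end budgetPrefix

section chCard

variable {ι : Type*} [LinearOrder ι] {w : ι → ℝ} {B : ℝ}

theorem chCard_eq (A : Finset ι) :
    chCard w B A = (A.sort.take (budgetPrefixLength w B A.sort)).toFinset := by
  unfold chCard budgetPrefixLength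
  congr!

theorem card_chCard (A : Finset ι) : (chCard w B A).card = budgetPrefixLength w B A.sort := by
  rw [chCard_eq, List.toFinset_card_of_nodup ((List.take_sublist _ _).nodup (A.sort_nodup _)),
    List.length_take, min_eq_left (budgetPrefixLength_le_length _)]

theorem mem_chCard (hw : ∀ x, 0 ≤ w x) {A : Finset ι} {x : ι} :
    x ∈ chCard w B A ↔ x ∈ A ∧ ∑ y ∈ A with y ≤ x, w y ≤ B := by
  rw [chCard_eq, List.mem_toFinset, List.mem_take_iff_getElem, ← Finset.mem_sort (· ≤ ·),
    List.mem_iff_getElem]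
  constructor
  · rintro ⟨j, hj, rfl⟩
    have hjA : j < A.sort.length := lt_of_lt_of_le hj (min_le_right _ _)
    refine ⟨⟨j, hjA, rfl⟩, ?_⟩
    rw [Finset.sum_filter_le_sort_getElem w A hjA]
    exact (lt_budgetPrefixLength_iff hw hjA).1 (lt_of_lt_of_le hj (min_le_left _ _))
  · rintro ⟨⟨j, hjA, rfl⟩, hsum⟩
    rw [Finset.sum_filter_le_sort_getElem w A hjA] at hsum
    exact ⟨j, lt_min ((lt_budgetPrefixLength_iff hw hjA).2 hsum) hjA, rfl⟩

theorem chCard_inter_subset (hw : ∀ x, 0 ≤ w x) {s t : Finset ι} (hst : s ⊆ t) :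
    chCard w B t ∩ s ⊆ chCard w B s := by
  intro x hx
  rw [Finset.mem_inter, mem_chCard hw] at hx
  refine (mem_chCard hw).2 ⟨hx.2, le_trans ?_ hx.1.2⟩
  exact Finset.sum_le_sum_of_subset_of_nonneg (Finset.filter_subset_filter _ hst)
    fun y _ _ => hw y

theorem card_chCard_mono (hw : Monotone w) {s t : Finset ι} (hst : s ⊆ t) :
    (chCard w B s).card ≤ (chCard w B t).card := by
  rw [card_chCard, card_chCard]
  exact budgetPrefixLength_le_of_sublist hw (Finset.sort_sublist_sort_of_subset hst)
    (Finset.sortedLT_sort t)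

end chCard

theorem chCard_SUB_IRC_LAD_general {ι : Type*} [LinearOrder ι]
    (w : ι → ℝ) (B : ℝ) (hw : ∀ x, 0 < w x)
    (hmono : Monotone w) :
    (∀ X'' X' : Finset ι, X'' ⊆ X' →
        X'' \ chCard w B X'' ⊆ X' \ chCard w B X') ∧
    (∀ X' X'' : Finset ι, Disjoint X' X'' →
        chCard w B (X' ∪ X'') ⊆ X' → chCard w B (X' ∪ X'') = chCard w B X') ∧
    (∀ X'' X' : Finset ι, X'' ⊆ X' →
        (chCard w B X'').card ≤ (chCard w B X').card) := by
  have hw₀ : ∀ x, 0 ≤ w x := fun x => (hw x).le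
  refine ⟨fun X'' X' hsub x hx => ?_, fun X' X'' _ hch => ?_,
    fun X'' X' hsub => card_chCard_mono hmono hsub⟩
  · rw [Finset.mem_sdiff] at hx ⊢
    exact ⟨hsub hx.1, fun hx' =>
      hx.2 (chCard_inter_subset hw₀ hsub (Finset.mem_inter.2 ⟨hx', hx.1⟩))⟩
  · have hXY : X' ⊆ X' ∪ X'' := Finset.subset_union_left
    have hsub := chCard_inter_subset (B := B) hw₀ hXY
    rw [Finset.inter_eq_left.2 hch] at hsub
    exact Finset.eq_of_subset_of_card_le hsub (card_chCard_mono hmono hXY)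

/-- The maximum-cardinality greedy choice function satisfies
substitutability, irrelevance of rejected contracts, and the law of aggregate
demand. -/
theorem chCard_SUB_IRC_LAD {ι : Type*} [LinearOrder ι]
    (w : ι → ℝ) (B : ℝ) (hB : 0 < B) (hw : ∀ x, 0 < w x)
    (hmono : Monotone w) :
    (∀ X'' X' : Finset ι, X'' ⊆ X' →
        X'' \ chCard w B X'' ⊆ X' \ chCard w B X') ∧
    (∀ X' X'' : Finset ι, Disjoint X' X'' →
        chCard w B (X' ∪ X'') ⊆ X' → chCard w B (X' ∪ X'') = chCard w B X') ∧
    (∀ X'' X' : Finset ι, X'' ⊆ X' →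
        (chCard w B X'').card ≤ (chCard w B X').card) :=
  chCard_SUB_IRC_LAD_general w B hw hmono
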